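/- For responses y* ∈ (0,1)^n strictly between 0 and 1 and any n × p matrix X with full column rank p ≤ n, the logistic log-likelihood ℓ(β; y*, X) = Σ_j [y*_j x_j^⊤ β − ζ(x_j^⊤ β)] is strictly concave in β and attains its maximum at a unique β ∈ ℝ^p; i.e., the MDYPL estimate exists and is unique for every data configuration. -/

import Mathlib

noncomputable def zeta (x : ℝ) : ℝ := Real.log (1 + Real.exp x)

noncomputable def loglik {n p : ℕ} (y : Fin n → ℝ) (X : Fin n → Fin p → ℝ)
    (β : Fin p → ℝ) : ℝ :=
  ∑ j, (y j * (∑ i, X j i * β i) - zeta (∑ i, X j i * β i))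

/-!
Write `ℓ(β) = g(Xβ)` with `g(η) = ∑ⱼ (yⱼ ηⱼ - ζ(ηⱼ))`. As `ζ` is strictly convex, `g` is strictly
concave, hence so is `g ∘ X` for injective `X`, and a strictly concave function has at most one
maximiser. For existence, every summand of `g` is nonpositive and tends to `-∞` as `|ηⱼ| → ∞`
(like `yⱼ ηⱼ` on the left and `(yⱼ - 1) ηⱼ` on the right, because `0 < yⱼ < 1`). So `g → -∞` at
infinity, and so does `ℓ` since an injective linear map is a closed embedding; a continuous
function with this property attains its maximum.
-/

open Set Filter

lemma continuous_zeta : Continuous zeta :=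
  (continuous_const.add Real.continuous_exp).log fun x => (add_pos one_pos (Real.exp_pos x)).ne'

lemma hasDerivAt_zeta (x : ℝ) : HasDerivAt zeta (Real.exp x / (1 + Real.exp x)) x := by
  unfold zeta
  simpa using ((Real.hasDerivAt_exp x).const_add 1).log (add_pos one_pos (Real.exp_pos x)).ne'

lemma strictConvexOn_zeta : StrictConvexOn ℝ univ zeta := by
  refine strictConvexOn_univ_of_deriv2_pos continuous_zeta fun x => ?_
  have hσ : HasDerivAt (fun x => Real.exp x / (1 + Real.exp x))
      (Real.exp x / (1 + Real.exp x) ^ 2) x := by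
    refine ((Real.hasDerivAt_exp x).div ((Real.hasDerivAt_exp x).const_add 1)
      (by positivity)).congr_deriv ?_
    ring
  rw [Function.iterate_succ_apply, Function.iterate_one,
    funext fun x => (hasDerivAt_zeta x).deriv, hσ.deriv]
  positivity

lemma zeta_nonneg (t : ℝ) : 0 ≤ zeta t :=
  Real.log_nonneg (by linarith [Real.exp_pos t])

lemma le_zeta (t : ℝ) : t ≤ zeta t := by
  simpa [zeta] using Real.log_le_log (Real.exp_pos t) (le_add_of_nonneg_left zero_le_one)

lemma mul_sub_zeta_nonpos {y : ℝ} (hy : y ∈ Icc 0 1) (t : ℝ) : y * t - zeta t ≤ 0 := by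
  rcases le_total 0 t with ht | ht
  · nlinarith [le_zeta t, hy.2]
  · nlinarith [zeta_nonneg t, hy.1]

lemma strictConcaveOn_mul_sub_zeta (y : ℝ) : StrictConcaveOn ℝ univ fun t => y * t - zeta t :=
  ((LinearMap.mulLeft ℝ y).concaveOn convex_univ).sub_strictConvexOn strictConvexOn_zeta

lemma tendsto_mul_sub_zeta_cocompact {y : ℝ} (hy : y ∈ Ioo 0 1) :
    Tendsto (fun t => y * t - zeta t) (cocompact ℝ) atBot := by
  rw [cocompact_eq_atBot_atTop, tendsto_sup]
  constructor
  · refine tendsto_atBot_mono (fun t => ?_) (tendsto_id.const_mul_atBot hy.1)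
    simp only [id]
    linarith [zeta_nonneg t]
  · refine tendsto_atBot_mono (fun t => ?_)
      (tendsto_id.const_mul_atTop_of_neg (sub_neg.2 hy.2))
    simp only [id]
    linarith [le_zeta t]

theorem StrictConcaveOn.comp_linearMap {𝕜 E F β : Type*} [Semiring 𝕜] [PartialOrder 𝕜]
    [AddCommMonoid E] [AddCommMonoid F] [AddCommMonoid β] [PartialOrder β]
    [Module 𝕜 E] [Module 𝕜 F] [SMul 𝕜 β] {f : F → β} {s : Set F}
    (hf : StrictConcaveOn 𝕜 s f) {g : E →ₗ[𝕜] F} (hg : Function.Injective g) :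
    StrictConcaveOn 𝕜 (g ⁻¹' s) (f ∘ g) :=
  ⟨hf.1.linear_preimage _, fun x hx y hy hxy a b ha hb hab => by
    simpa only [Function.comp_apply, map_add, map_smul] using
      hf.2 hx hy (hg.ne hxy) ha hb hab⟩

section
variable {ι : Type*} [Fintype ι]

lemma strictConcaveOn_univ_sum_apply {f : ι → ℝ → ℝ} (hf : ∀ i, StrictConcaveOn ℝ univ (f i)) :
    StrictConcaveOn ℝ univ fun x : ι → ℝ => ∑ i, f i (x i) := by
  refine ⟨convex_univ, fun x _ y _ hxy a b ha hb hab => ?_⟩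
  obtain ⟨k, hk⟩ := Function.ne_iff.1 hxy
  simp only [smul_eq_mul, Finset.mul_sum, ← Finset.sum_add_distrib, Pi.add_apply, Pi.smul_apply]
  refine Finset.sum_lt_sum (fun i _ => ?_) ⟨k, Finset.mem_univ k, ?_⟩
  · exact (hf i).concaveOn.2 trivial trivial ha.le hb.le hab
  · exact (hf k).2 trivial trivial hk ha hb hab

lemma tendsto_sum_apply_cocompact_atBot {X : ι → Type*} [∀ i, TopologicalSpace (X i)]
    {f : ∀ i, X i → ℝ} (hf_nonpos : ∀ i x, f i x ≤ 0)
    (hf : ∀ i, Tendsto (f i) (cocompact (X i)) atBot) :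
    Tendsto (fun x : ∀ i, X i => ∑ i, f i (x i)) (cocompact _) atBot := by
  rw [← coprodᵢ_cocompact, Filter.coprodᵢ, tendsto_iSup]
  refine fun i => tendsto_atBot_mono (fun x => ?_) ((hf i).comp tendsto_comap)
  classical
  rw [Function.comp_apply, ← Finset.add_sum_erase _ _ (Finset.mem_univ i)]
  exact add_le_of_nonpos_right (Finset.sum_nonpos fun j _ => hf_nonpos j _)

noncomputable def loglikOfPredictor (y η : ι → ℝ) : ℝ :=
  ∑ j, (y j * η j - zeta (η j))

lemma continuous_loglikOfPredictor (y : ι → ℝ) : Continuous (loglikOfPredictor y) :=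
  continuous_finsetSum _ fun j _ =>
    (continuous_const.mul (continuous_apply j)).sub (continuous_zeta.comp (continuous_apply j))

lemma strictConcaveOn_loglikOfPredictor (y : ι → ℝ) :
    StrictConcaveOn ℝ univ (loglikOfPredictor y) :=
  strictConcaveOn_univ_sum_apply fun j => strictConcaveOn_mul_sub_zeta (y j)

lemma tendsto_loglikOfPredictor_cocompact {y : ι → ℝ} (hy : ∀ j, y j ∈ Ioo 0 1) :
    Tendsto (loglikOfPredictor y) (cocompact _) atBot :=
  tendsto_sum_apply_cocompact_atBot (fun j => mul_sub_zeta_nonpos (Ioo_subset_Icc_self (hy j)))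
    fun j => tendsto_mul_sub_zeta_cocompact (hy j)

end

lemma loglik_eq_comp_mulVecLin {n p : ℕ} (y : Fin n → ℝ) (X : Fin n → Fin p → ℝ) :
    loglik y X = loglikOfPredictor y ∘ Matrix.mulVecLin X :=
  rfl

theorem stmt_5_general {n p : ℕ} (ystar : Fin n → ℝ)
    (hy : ∀ j, ystar j ∈ Set.Ioo (0 : ℝ) 1) (X : Fin n → Fin p → ℝ)
    (hX : Function.Injective fun β : Fin p → ℝ => fun j => ∑ i, X j i * β i) :
    StrictConcaveOn ℝ Set.univ (loglik ystar X) ∧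
    ∃! β : Fin p → ℝ, IsMaxOn (loglik ystar X) Set.univ β := by
  rw [loglik_eq_comp_mulVecLin]
  set L := Matrix.mulVecLin X
  have hconc : StrictConcaveOn ℝ univ (loglikOfPredictor ystar ∘ L) :=
    (strictConcaveOn_loglikOfPredictor ystar).comp_linearMap hX
  have hcont : Continuous (loglikOfPredictor ystar ∘ L) :=
    (continuous_loglikOfPredictor ystar).comp L.continuous_of_finiteDimensional
  have hlim : Tendsto (loglikOfPredictor ystar ∘ L) (cocompact _) atBot :=
    (tendsto_loglikOfPredictor_cocompact hy).comp
      (L.isClosedEmbedding_of_injective (LinearMap.ker_eq_bot.2 hX)).tendsto_cocompact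
  obtain ⟨β, hβ⟩ := hcont.exists_forall_ge hlim
  have hmax : IsMaxOn (loglikOfPredictor ystar ∘ L) univ β := fun b _ => hβ b
  exact ⟨hconc, β, hmax, fun b hb => hconc.eq_of_isMaxOn hb hmax trivial trivial⟩

theorem stmt_5 {n p : ℕ} (hpn : p ≤ n) (ystar : Fin n → ℝ)
    (hy : ∀ j, ystar j ∈ Set.Ioo (0 : ℝ) 1) (X : Fin n → Fin p → ℝ)
    (hX : Function.Injective fun β : Fin p → ℝ => fun j => ∑ i, X j i * β i) :
    StrictConcaveOn ℝ Set.univ (loglik ystar X) ∧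
    ∃! β : Fin p → ℝ, IsMaxOn (loglik ystar X) Set.univ β :=
  stmt_5_general ystar hy X hX
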